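/- For every multi-index μ and every positive integer n: ∑_{k≥1} k·(μ_k + 1)·(n+k)·μ_{n+k} ≤ 2·‖μ‖² and ∑_{k≥1} k·μ_k·(n+k)·(μ_{n+k} + 1) ≤ (n+2)·‖μ‖². (These are the bounds ‖L̃_n Φ_μ‖² ≤ 2‖μ‖² and ‖L̃_{−n} Φ_μ‖² ≤ (n+2)‖μ‖² for the quadratic parts L̃_{±n} = ∑_{k≥1} a_{−k}a_{n+k} resp. ∑_{k≥1} a_{−n−k}a_k of the Virasoro operators in the Fock representation, showing that the domain of L₀ is contained in the domain of every L_n.) -/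
import Mathlib


/-- A multi-index: a finitely supported function from the positive integers to `ℕ`. -/
abbrev MultiIndex := ℕ+ →₀ ℕ

/-- The weight `‖μ‖ = ∑_{i≥1} i·μ_i` of a multi-index. -/
def miWt (μ : MultiIndex) : ℕ := ∑ i ∈ μ.support, (i : ℕ) * μ i

lemma diag_le (T : Finset ℕ+) (a b : ℕ+ → ℕ) :
    ∑ k ∈ T, a k * b k ≤ (∑ k ∈ T, a k) * (∑ k ∈ T, b k) := by
  rw [Finset.sum_mul_sum]
  refine Finset.sum_le_sum fun i hi => ?_
  exact Finset.single_le_sum (f := fun j => a i * b j) (fun j _ => Nat.zero_le _) hi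

lemma image_wt_le (μ : MultiIndex) (T : Finset ℕ+) (g : ℕ+ → ℕ+)
    (hg : Function.Injective g) :
    ∑ k ∈ T, ((g k : ℕ)) * μ (g k) ≤ miWt μ := by
  have him := Finset.sum_image (s := T) (g := g) (f := fun j : ℕ+ => (j : ℕ) * μ j)
    (fun a _ b _ h => hg h)
  rw [← him]
  have h1 : miWt μ = ∑ j ∈ μ.support ∪ T.image g, (j : ℕ) * μ j :=
    Finset.sum_subset Finset.subset_union_left
      (fun j _ hj => by simp [Finsupp.notMem_support_iff.mp hj])
  rw [h1]
  exact Finset.sum_le_sum_of_subset Finset.subset_union_right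

lemma nat1 (μ : MultiIndex) (n : ℕ+) (T : Finset ℕ+) :
    ∑ k ∈ T, (k : ℕ) * (μ k + 1) * ((n : ℕ) + (k : ℕ)) * μ (n + k) ≤ 2 * miWt μ ^ 2 := by
  have key : ∀ k ∈ T, (k : ℕ) * (μ k + 1) * ((n : ℕ) + (k : ℕ)) * μ (n + k)
      = ((k : ℕ) * μ k) * (((n + k : ℕ+) : ℕ) * μ (n + k))
        + (k : ℕ) * (((n + k : ℕ+) : ℕ) * μ (n + k)) := by
    intro k _; push_cast; ring
  rw [Finset.sum_congr rfl key, Finset.sum_add_distrib]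
  have hinj : Function.Injective (fun k : ℕ+ => n + k) := fun a b h => by
    simpa using h
  have hW1 : ∑ k ∈ T, (k : ℕ) * μ k ≤ miWt μ := image_wt_le μ T id Function.injective_id
  have hW2 : ∑ k ∈ T, ((n + k : ℕ+) : ℕ) * μ (n + k) ≤ miWt μ := image_wt_le μ T _ hinj
  have hA : ∑ k ∈ T, ((k : ℕ) * μ k) * (((n + k : ℕ+) : ℕ) * μ (n + k)) ≤ miWt μ * miWt μ :=
    (diag_le T _ _).trans (Nat.mul_le_mul hW1 hW2)
  have hB : ∑ k ∈ T, (k : ℕ) * (((n + k : ℕ+) : ℕ) * μ (n + k)) ≤ miWt μ * miWt μ := by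
    have hterm : ∀ k ∈ T, (k : ℕ) * (((n + k : ℕ+) : ℕ) * μ (n + k))
        ≤ (((n + k : ℕ+) : ℕ) * μ (n + k)) * (((n + k : ℕ+) : ℕ) * μ (n + k)) := by
      intro k _
      rcases Nat.eq_zero_or_pos (μ (n + k)) with h | h
      · simp [h]
      · refine Nat.mul_le_mul ?_ le_rfl
        calc (k : ℕ) ≤ ((n + k : ℕ+) : ℕ) := by push_cast; omega
          _ ≤ ((n + k : ℕ+) : ℕ) * μ (n + k) := Nat.le_mul_of_pos_right _ h
    exact (Finset.sum_le_sum hterm).trans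
      ((diag_le T _ _).trans (Nat.mul_le_mul hW2 hW2))
  calc _ ≤ miWt μ * miWt μ + miWt μ * miWt μ := Nat.add_le_add hA hB
    _ = 2 * miWt μ ^ 2 := by ring

lemma nat2 (μ : MultiIndex) (n : ℕ+) (T : Finset ℕ+) :
    ∑ k ∈ T, (k : ℕ) * μ k * ((n : ℕ) + (k : ℕ)) * (μ (n + k) + 1)
      ≤ ((n : ℕ) + 2) * miWt μ ^ 2 := by
  have key : ∀ k ∈ T, (k : ℕ) * μ k * ((n : ℕ) + (k : ℕ)) * (μ (n + k) + 1)
      = ((k : ℕ) * μ k) * (((n + k : ℕ+) : ℕ) * μ (n + k))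
        + ((n : ℕ) * ((k : ℕ) * μ k) + (k : ℕ) * ((k : ℕ) * μ k)) := by
    intro k _; push_cast; ring
  rw [Finset.sum_congr rfl key, Finset.sum_add_distrib, Finset.sum_add_distrib]
  have hinj : Function.Injective (fun k : ℕ+ => n + k) := fun a b h => by
    simpa using h
  have hW1 : ∑ k ∈ T, (k : ℕ) * μ k ≤ miWt μ := image_wt_le μ T id Function.injective_id
  have hW2 : ∑ k ∈ T, ((n + k : ℕ+) : ℕ) * μ (n + k) ≤ miWt μ := image_wt_le μ T _ hinj
  have hA : ∑ k ∈ T, ((k : ℕ) * μ k) * (((n + k : ℕ+) : ℕ) * μ (n + k)) ≤ miWt μ * miWt μ :=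
    (diag_le T _ _).trans (Nat.mul_le_mul hW1 hW2)
  have hB : ∑ k ∈ T, (n : ℕ) * ((k : ℕ) * μ k) ≤ (n : ℕ) * (miWt μ * miWt μ) := by
    rw [← Finset.mul_sum]
    refine Nat.mul_le_mul le_rfl (hW1.trans ?_)
    rcases Nat.eq_zero_or_pos (miWt μ) with h | h
    · simp [h]
    · exact Nat.le_mul_of_pos_right _ h
  have hC : ∑ k ∈ T, (k : ℕ) * ((k : ℕ) * μ k) ≤ miWt μ * miWt μ := by
    have hterm : ∀ k ∈ T, (k : ℕ) * ((k : ℕ) * μ k)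
        ≤ ((k : ℕ) * μ k) * ((k : ℕ) * μ k) := by
      intro k _
      rcases Nat.eq_zero_or_pos (μ k) with h | h
      · simp [h]
      · exact Nat.mul_le_mul (Nat.le_mul_of_pos_right _ h) le_rfl
    exact (Finset.sum_le_sum hterm).trans
      ((diag_le T _ _).trans (Nat.mul_le_mul hW1 hW1))
  calc _ ≤ miWt μ * miWt μ + ((n : ℕ) * (miWt μ * miWt μ) + miWt μ * miWt μ) :=
      Nat.add_le_add hA (Nat.add_le_add hB hC)
    _ = ((n : ℕ) + 2) * miWt μ ^ 2 := by ring

/-- For every multi-index `μ` and positive integer `n`: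
`∑_{k≥1} k(μ_k+1)(n+k)μ_{n+k} ≤ 2‖μ‖²` and `∑_{k≥1} k·μ_k·(n+k)(μ_{n+k}+1) ≤ (n+2)‖μ‖²`
(the bounds `‖L̃_{±n}Φ_μ‖² ≤ 2‖μ‖²` resp. `(n+2)‖μ‖²` for the quadratic parts of the
Virasoro operators in the Fock representation). -/
theorem stmt17 (μ : MultiIndex) (n : ℕ+) :
    (∑' k : ℕ+, ((k : ℕ) : ℝ) * ((μ k : ℝ) + 1) * (((n : ℕ) : ℝ) + (k : ℕ)) *
        (μ (n + k) : ℝ)) ≤ 2 * ((miWt μ : ℝ)) ^ 2 ∧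
    (∑' k : ℕ+, ((k : ℕ) : ℝ) * (μ k : ℝ) * (((n : ℕ) : ℝ) + (k : ℕ)) *
        ((μ (n + k) : ℝ) + 1)) ≤ (((n : ℕ) : ℝ) + 2) * ((miWt μ : ℝ)) ^ 2 := by
  constructor
  · have hi : Function.Injective (fun k : ℕ+ => n + k) := fun a b h => by simpa using h
    have hinj := Function.Injective.injOn hi (s := ↑μ.support)
    set T : Finset ℕ+ := μ.support.preimage (fun k => n + k) (Function.Injective.injOn hi) with hT
    have h0 : ∀ k ∉ T, ((k : ℕ) : ℝ) * ((μ k : ℝ) + 1) * (((n : ℕ) : ℝ) + (k : ℕ)) *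
        (μ (n + k) : ℝ) = 0 := by
      intro k hk
      have : μ (n + k) = 0 := by
        by_contra h
        exact hk (by simp [hT, Finset.mem_preimage, Finsupp.mem_support_iff, h])
      simp [this]
    rw [tsum_eq_sum h0]
    have hcast : ∀ k ∈ T, ((k : ℕ) : ℝ) * ((μ k : ℝ) + 1) * (((n : ℕ) : ℝ) + (k : ℕ)) *
        (μ (n + k) : ℝ)
        = (((k : ℕ) * (μ k + 1) * ((n : ℕ) + (k : ℕ)) * μ (n + k) : ℕ) : ℝ) := by
      intro k _; push_cast; ring
    rw [Finset.sum_congr rfl hcast, ← Nat.cast_sum]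
    calc ((∑ k ∈ T, (k : ℕ) * (μ k + 1) * ((n : ℕ) + (k : ℕ)) * μ (n + k) : ℕ) : ℝ)
        ≤ ((2 * miWt μ ^ 2 : ℕ) : ℝ) := Nat.cast_le.mpr (nat1 μ n T)
      _ = 2 * ((miWt μ : ℝ)) ^ 2 := by push_cast; ring
  · set T : Finset ℕ+ := μ.support with hT
    have h0 : ∀ k ∉ T, ((k : ℕ) : ℝ) * (μ k : ℝ) * (((n : ℕ) : ℝ) + (k : ℕ)) *
        ((μ (n + k) : ℝ) + 1) = 0 := by
      intro k hk
      have : μ k = 0 := Finsupp.notMem_support_iff.mp hk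
      simp [this]
    rw [tsum_eq_sum h0]
    have hcast : ∀ k ∈ T, ((k : ℕ) : ℝ) * (μ k : ℝ) * (((n : ℕ) : ℝ) + (k : ℕ)) *
        ((μ (n + k) : ℝ) + 1)
        = (((k : ℕ) * μ k * ((n : ℕ) + (k : ℕ)) * (μ (n + k) + 1) : ℕ) : ℝ) := by
      intro k _; push_cast; ring
    rw [Finset.sum_congr rfl hcast, ← Nat.cast_sum]
    calc ((∑ k ∈ T, (k : ℕ) * μ k * ((n : ℕ) + (k : ℕ)) * (μ (n + k) + 1) : ℕ) : ℝ)
        ≤ ((((n : ℕ) + 2) * miWt μ ^ 2 : ℕ) : ℝ) := Nat.cast_le.mpr (nat2 μ n T)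
      _ = (((n : ℕ) : ℝ) + 2) * ((miWt μ : ℝ)) ^ 2 := by push_cast; ring
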